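/- Define the difference operators Δ_{P,n}^{(α,β;0)} := P_n^{(α,β)} and Δ_{P,n}^{(α,β;ℓ+1)} := Δ_{P,n+1}^{(α,β;ℓ)} − Δ_{P,n}^{(α,β;ℓ)}, with Δ_{P,n}^{(α,β;−1)} ≡ 0. Then for all ℓ ≥ 0 and n ≥ 1: (n+1)·Δ_{P,n}^{(α,β;ℓ+1)}(x) + ℓ·Δ_{P,n+1}^{(α,β;ℓ)}(x) + ℓ(1−x)·Δ_{P,n+1}^{(α+1,β;ℓ−1)}(x) + (n + (α+β)/2 + 1)(1−x)·Δ_{P,n}^{(α+1,β;ℓ)}(x) = α·Δ_{P,n}^{(α,β;ℓ)}(x). -/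

import Mathlib

/-- The Jacobi polynomial `P_n^{(α,β)}` via the explicit hypergeometric-type formula. -/
noncomputable def jacobiP (α β : ℝ) (n : ℕ) (x : ℝ) : ℝ :=
  (Real.Gamma (α + n + 1) / ((n.factorial : ℝ) * Real.Gamma (α + β + n + 1))) *
    ∑ k ∈ Finset.range (n + 1),
      (n.choose k : ℝ) * (Real.Gamma (α + β + n + k + 1) / Real.Gamma (α + k + 1)) *
        ((x - 1) / 2) ^ k

/-- The `ℓ`-th finite difference in `n` of the Jacobi polynomials:
`Δ^{(0)}_n = P_n^{(α,β)}`, `Δ^{(ℓ+1)}_n = Δ^{(ℓ)}_{n+1} − Δ^{(ℓ)}_n`. -/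
noncomputable def jacobiDelta (α β : ℝ) : ℕ → ℕ → ℝ → ℝ
  | 0 => fun n => jacobiP α β n
  | (ℓ + 1) => fun n x => jacobiDelta α β ℓ (n + 1) x - jacobiDelta α β ℓ n x

/-! Expanding `P_n^{(α,β)}` in powers of `(x - 1)/2`, raising `n` or `α` by one multiplies each
coefficient by a ratio of Gamma values, and comparing coefficients with Pascal's rule gives
`(n+1) P_{n+1}^{(α,β)} = (n+1+α) P_n^{(α,β)} + (2n+α+β+2) (x-1)/2 · P_n^{(α+1,β)}`,
which is the case `ℓ = 0`. The identity for `ℓ + 1` at `n` is the difference of the identities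
for `ℓ` at `n + 1` and at `n`: each of the two terms whose coefficient depends on `n` leaves one
extra `Δ_{n+1}` behind, and these raise the two coefficients `ℓ` to `ℓ + 1`. -/

open Finset

lemma Nat.cast_choose_succ_right_mul {R : Type*} [Ring R] (n k : ℕ) :
    (n.choose (k + 1) : R) * (k + 1) = n.choose k * (n - k) := by
  rcases le_or_gt k n with h | h
  · rw [← Nat.cast_sub h]; exact_mod_cast congrArg (Nat.cast : ℕ → R) (Nat.choose_succ_right_eq n k)
  · simp [Nat.choose_eq_zero_of_lt h, Nat.choose_eq_zero_of_lt (Nat.lt_succ_of_lt h)]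

lemma Real.Gamma_eq_mul_Gamma_of_eq_add_one {z w : ℝ} (hz : z ≠ 0) (hw : w = z + 1) :
    Real.Gamma w = z * Real.Gamma z := by
  rw [hw, Real.Gamma_add_one hz]

noncomputable def jacobiCoeff (α β : ℝ) (n k : ℕ) : ℝ :=
  Real.Gamma (α + n + 1) / ((n.factorial : ℝ) * Real.Gamma (α + β + n + 1)) *
    ((n.choose k : ℝ) * (Real.Gamma (α + β + n + k + 1) / Real.Gamma (α + k + 1)))

lemma jacobiP_eq_sum (α β : ℝ) (n : ℕ) (x : ℝ) :
    jacobiP α β n x = ∑ k ∈ range (n + 1), jacobiCoeff α β n k * ((x - 1) / 2) ^ k := by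
  simp only [jacobiP, jacobiCoeff, mul_sum, mul_assoc]

lemma jacobiCoeff_eq_zero_of_lt (α β : ℝ) {n k : ℕ} (h : n < k) : jacobiCoeff α β n k = 0 := by
  simp [jacobiCoeff, Nat.choose_eq_zero_of_lt h]

lemma jacobiP_eq_sum_range_add_two (α β : ℝ) (n : ℕ) (x : ℝ) :
    jacobiP α β n x = ∑ k ∈ range (n + 1 + 1), jacobiCoeff α β n k * ((x - 1) / 2) ^ k := by
  rw [sum_range_succ, jacobiCoeff_eq_zero_of_lt α β n.lt_succ_self, zero_mul, add_zero,
    jacobiP_eq_sum]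

section

variable {α β : ℝ} {n k : ℕ}

lemma jacobiCoeff_succ_zero (hα : -1 < α) (hs : 0 < α + β + n + 1) :
    ((n : ℝ) + 1) * jacobiCoeff α β (n + 1) 0 = ((n : ℝ) + 1 + α) * jacobiCoeff α β n 0 := by
  have ha : 0 < α + n + 1 := by linarith [(n.cast_nonneg : (0 : ℝ) ≤ n)]
  have hΓa : Real.Gamma (α + (n + 1 : ℕ) + 1) = (α + n + 1) * Real.Gamma (α + n + 1) :=
    Real.Gamma_eq_mul_Gamma_of_eq_add_one ha.ne' (by push_cast; ring)
  have hΓs : Real.Gamma (α + β + (n + 1 : ℕ) + 1) = (α + β + n + 1) * Real.Gamma (α + β + n + 1) :=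
    Real.Gamma_eq_mul_Gamma_of_eq_add_one hs.ne' (by push_cast; ring)
  have : Real.Gamma (α + β + n + 1) ≠ 0 := (Real.Gamma_pos_of_pos hs).ne'
  simp only [jacobiCoeff, Nat.cast_zero, add_zero, Nat.choose_zero_right, hΓa, hΓs, Nat.factorial_succ]
  push_cast
  field_simp
  ring

lemma jacobiCoeff_succ_succ (hα : -1 < α) (hs : 0 < α + β + n + 1) :
    ((n : ℝ) + 1) * jacobiCoeff α β (n + 1) (k + 1) =
      ((n : ℝ) + 1 + α) * jacobiCoeff α β n (k + 1) +
        (2 * (n : ℝ) + α + β + 2) * jacobiCoeff (α + 1) β n k := by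
  have ha : 0 < α + n + 1 := by linarith [(n.cast_nonneg : (0 : ℝ) ≤ n)]
  have hp : 0 < α + k + 1 := by linarith [(k.cast_nonneg : (0 : ℝ) ≤ k)]
  have ht : 0 < α + β + n + k + 1 := by linarith [(k.cast_nonneg : (0 : ℝ) ≤ k)]
  have hΓa : Real.Gamma (α + (n + 1 : ℕ) + 1) = (α + n + 1) * Real.Gamma (α + n + 1) :=
    Real.Gamma_eq_mul_Gamma_of_eq_add_one ha.ne' (by push_cast; ring)
  have hΓa' : Real.Gamma (α + 1 + n + 1) = (α + n + 1) * Real.Gamma (α + n + 1) :=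
    Real.Gamma_eq_mul_Gamma_of_eq_add_one ha.ne' (by ring)
  have hΓs : Real.Gamma (α + β + (n + 1 : ℕ) + 1) = (α + β + n + 1) * Real.Gamma (α + β + n + 1) :=
    Real.Gamma_eq_mul_Gamma_of_eq_add_one hs.ne' (by push_cast; ring)
  have hΓs' : Real.Gamma (α + 1 + β + n + 1) = (α + β + n + 1) * Real.Gamma (α + β + n + 1) :=
    Real.Gamma_eq_mul_Gamma_of_eq_add_one hs.ne' (by ring)
  have hΓp : Real.Gamma (α + (k + 1 : ℕ) + 1) = (α + k + 1) * Real.Gamma (α + k + 1) :=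
    Real.Gamma_eq_mul_Gamma_of_eq_add_one hp.ne' (by push_cast; ring)
  have hΓp' : Real.Gamma (α + 1 + k + 1) = (α + k + 1) * Real.Gamma (α + k + 1) :=
    Real.Gamma_eq_mul_Gamma_of_eq_add_one hp.ne' (by ring)
  have hΓt : Real.Gamma (α + β + n + (k + 1 : ℕ) + 1) = (α + β + n + k + 1) * Real.Gamma (α + β + n + k + 1) :=
    Real.Gamma_eq_mul_Gamma_of_eq_add_one ht.ne' (by push_cast; ring)
  have hΓt' : Real.Gamma (α + 1 + β + n + k + 1) = (α + β + n + k + 1) * Real.Gamma (α + β + n + k + 1) :=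
    Real.Gamma_eq_mul_Gamma_of_eq_add_one ht.ne' (by ring)
  have hΓt'' : Real.Gamma (α + β + (n + 1 : ℕ) + (k + 1 : ℕ) + 1) =
      (α + β + n + (k + 1 : ℕ) + 1) * Real.Gamma (α + β + n + (k + 1 : ℕ) + 1) :=
    Real.Gamma_eq_mul_Gamma_of_eq_add_one (by push_cast; linarith) (by push_cast; ring)
  have : Real.Gamma (α + β + n + 1) ≠ 0 := (Real.Gamma_pos_of_pos hs).ne'
  have : Real.Gamma (α + k + 1) ≠ 0 := (Real.Gamma_pos_of_pos hp).ne'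
  simp only [jacobiCoeff, hΓa, hΓa', hΓs, hΓs', hΓp, hΓp', hΓt'', hΓt, hΓt', Nat.choose_succ_succ,
    Nat.factorial_succ]
  push_cast
  field_simp
  -- once the Gamma factors cancel, only Pascal's rule and this binomial identity remain
  linear_combination (α + n + 1) * Nat.cast_choose_succ_right_mul (R := ℝ) n k

lemma jacobiP_succ (hα : -1 < α) (hs : 0 < α + β + n + 1) (x : ℝ) :
    ((n : ℝ) + 1) * jacobiP α β (n + 1) x =
      ((n : ℝ) + 1 + α) * jacobiP α β n x +
        (2 * (n : ℝ) + α + β + 2) * ((x - 1) / 2) * jacobiP (α + 1) β n x := by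
  set y := (x - 1) / 2
  have hterm : ∀ k, ((n : ℝ) + 1) * (jacobiCoeff α β (n + 1) (k + 1) * y ^ (k + 1)) =
      ((n : ℝ) + 1 + α) * (jacobiCoeff α β n (k + 1) * y ^ (k + 1)) +
        (2 * (n : ℝ) + α + β + 2) * y * (jacobiCoeff (α + 1) β n k * y ^ k) := fun k => by
    rw [pow_succ]
    linear_combination y ^ k * y * jacobiCoeff_succ_succ (k := k) hα hs
  rw [jacobiP_eq_sum α β (n + 1), jacobiP_eq_sum_range_add_two α β n, jacobiP_eq_sum (α + 1) β n,
    sum_range_succ', sum_range_succ' _ (n + 1), mul_add, mul_sum, sum_congr rfl fun k _ => hterm k,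
    sum_add_distrib, ← mul_sum, ← mul_sum]
  linear_combination jacobiCoeff_succ_zero hα hs

end

lemma natCast_mul_jacobiDelta (α β : ℝ) (ℓ n : ℕ) (x : ℝ) :
    (ℓ : ℝ) * jacobiDelta α β ℓ n x =
      ℓ * (jacobiDelta α β (ℓ - 1) (n + 1) x - jacobiDelta α β (ℓ - 1) n x) := by
  cases ℓ <;> simp [jacobiDelta]

theorem jacobiDelta_recursion (α β : ℝ) (hα : -1 < α) (hβ : -1 < β)
    (ℓ n : ℕ) (hn : 1 ≤ n) (x : ℝ) :
    ((n : ℝ) + 1) * jacobiDelta α β (ℓ + 1) n x + (ℓ : ℝ) * jacobiDelta α β ℓ (n + 1) x +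
        (ℓ : ℝ) * (1 - x) * jacobiDelta (α + 1) β (ℓ - 1) (n + 1) x +
        ((n : ℝ) + (α + β) / 2 + 1) * (1 - x) * jacobiDelta (α + 1) β ℓ n x =
      α * jacobiDelta α β ℓ n x := by
  induction ℓ generalizing n with
  | zero =>
    simp only [jacobiDelta, Nat.cast_zero, zero_mul, add_zero]
    linear_combination jacobiP_succ hα (by linarith [(n.one_le_cast (α := ℝ)).2 hn]) x
  | succ ℓ ih =>
    have hnext := ih (n + 1) (by omega)
    simp only [jacobiDelta, Nat.add_one_sub_one] at hnext ih ⊢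
    push_cast at hnext ⊢
    linear_combination hnext - ih n hn +
      (1 - x) * natCast_mul_jacobiDelta (α + 1) β ℓ (n + 1) x
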